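/- arXiv:math/0111184 — 8 statements merged into one kernel-verified Lean document; each statement's English description precedes it below -/
import Mathlib

section
/- Let λ be an I-labelled Young diagram with l columns, and let d_i(λ^{≤k}) denote the number of boxes with label i in the first k columns of λ. Then the number of pairs of boxes (b, b') in λ such that the column of b' is strictly to the right of the column of b and the label of b' is one more than the label of b, namely ∑_{i∈ℤ/n} ∑_{k=1}^{l} (d_{i+1}(λ^{≤k}) - d_{i+1}(λ^{≤k-1}))·d_i(λ^{≤k-1}), equals the number of pairs (b, b'') of boxes with the same label such that the column of b'' is weakly to the right of the column of b and b'' is not the last box in its row. -/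
/-- An `I`-labelled Young diagram (`I = ℤ/nℤ`) is given as a list of rows,
each row being a pair (starting label, length); labels increase by 1 mod `n`
along a row. `dcount n rows i k` is the number of boxes labelled `i` among
the first `k` columns. -/
def dcount (n : ℕ) (rows : List (ZMod n × ℕ)) (i : ZMod n) (k : ℕ) : ℕ :=
  (rows.map (fun r =>
    ((Finset.range (min r.2 k)).filter (fun (j : ℕ) => r.1 + (j : ZMod n) = i)).card)).sum

private lemma cell_succ (n : ℕ) (r : ZMod n × ℕ) (i : ZMod n) (k : ℕ) :
    ((Finset.range (min r.2 (k+1))).filter (fun (j : ℕ) => r.1 + (j : ZMod n) = i)).card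
    = ((Finset.range (min r.2 k)).filter (fun (j : ℕ) => r.1 + (j : ZMod n) = i)).card
      + (if k + 1 ≤ r.2 ∧ r.1 + (k : ZMod n) = i then 1 else 0) := by
  by_cases h : k + 1 ≤ r.2
  · have h1 : min r.2 (k+1) = k+1 := min_eq_right h
    have h2 : min r.2 k = k := min_eq_right (by omega)
    rw [h1, h2, Finset.range_add_one, Finset.filter_insert]
    by_cases hc : r.1 + (k : ZMod n) = i
    · rw [if_pos hc, Finset.card_insert_of_notMem (by simp), if_pos ⟨h, hc⟩]
    · rw [if_neg hc, if_neg (fun hx => hc hx.2), add_zero]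
  · have h1 : min r.2 (k+1) = r.2 := min_eq_left (by omega)
    have h2 : min r.2 k = r.2 := min_eq_left (by omega)
    rw [h1, h2, if_neg (fun hx => h hx.1), add_zero]

private lemma dcount_succ (n : ℕ) (rows : List (ZMod n × ℕ)) (i : ZMod n) (k : ℕ) :
    dcount n rows i (k+1) = dcount n rows i k
      + (rows.map (fun r => if k + 1 ≤ r.2 ∧ r.1 + (k : ZMod n) = i then 1 else 0)).sum := by
  induction rows with
  | nil => simp [dcount]
  | cons a L ih =>
    simp only [dcount, List.map_cons, List.sum_cons] at ih ⊢
    rw [cell_succ, ih]; ring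

private lemma dcount_zero (n : ℕ) (rows : List (ZMod n × ℕ)) (i : ZMod n) :
    dcount n rows i 0 = 0 := by
  simp [dcount]

private lemma sum_list_comm {α β : Type*} (L : List α) (s : Finset β) (g : β → α → ℕ) :
    ∑ x ∈ s, (L.map (g x)).sum = (L.map (fun r => ∑ x ∈ s, g x r)).sum := by
  induction L with
  | nil => simp
  | cons a t ih => simp [Finset.sum_add_distrib, ih]

private lemma le_foldr_max (L : List ℕ) {x : ℕ} (hx : x ∈ L) : x ≤ L.foldr max 0 := by
  induction L with
  | nil => simp at hx
  | cons a t ih =>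
    simp only [List.foldr_cons]
    rcases List.mem_cons.mp hx with h | h
    · subst h; exact le_max_left _ _
    · exact le_trans (ih h) (le_max_right _ _)

private lemma mul_sum_list {α : Type*} (L : List α) (f : α → ℕ) (b : ℕ) :
    (L.map f).sum * b = (L.map (fun a => f a * b)).sum := by
  induction L with
  | nil => simp
  | cons a t ih => simp [add_mul, ih]


/-- the number of pairs of boxes `(b, b')` with `col b' > col b`
and `label b' = label b + 1`, which is
`∑_{i} ∑_{k=1}^{l} (d_{i+1}(λ^{≤k}) - d_{i+1}(λ^{≤k-1}))·d_i(λ^{≤k-1})`,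
equals the number of pairs `(b, b'')` with the same label, `col b'' ≥ col b`,
and `b''` not at the end of its row; the latter is the sum, over all
non-row-ending boxes `b''` (say in position `j` of a row starting with label
`a`, so `b''` has label `a + j` and lies in column `j+1`), of
`d_{a+j}(λ^{≤ j+1})`. -/
theorem stmt_1 (n : ℕ) [NeZero n] (rows : List (ZMod n × ℕ))
    (l : ℕ) (hl : l = (rows.map Prod.snd).foldr max 0) :
    ∑ i : ZMod n, ∑ k ∈ Finset.Icc 1 l,
        (dcount n rows (i + 1) k - dcount n rows (i + 1) (k - 1)) * dcount n rows i (k - 1)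
      = (rows.map (fun r =>
          ∑ j ∈ Finset.range (r.2 - 1), dcount n rows (r.1 + (j : ZMod n)) (j + 1))).sum := by
  have hrows : ∀ r ∈ rows, r.2 ≤ l := by
    intro r hr
    rw [hl]
    exact le_foldr_max _ (List.mem_map_of_mem (f := Prod.snd) hr)
  -- reindex k ∈ Icc 1 l to j ∈ range l with k = j + 1
  have step1 : ∀ i : ZMod n, ∑ k ∈ Finset.Icc 1 l,
        (dcount n rows (i + 1) k - dcount n rows (i + 1) (k - 1)) * dcount n rows i (k - 1)
      = ∑ j ∈ Finset.range l,
        (rows.map (fun r =>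
          (if j + 1 ≤ r.2 ∧ r.1 + (j : ZMod n) = i + 1 then 1 else 0) * dcount n rows i j)).sum := by
    intro i
    rw [show Finset.Icc 1 l = Finset.Ico 1 (l+1) by rfl, Finset.sum_Ico_eq_sum_range]
    simp only [Nat.add_sub_cancel]
    refine Finset.sum_congr rfl fun j _ => ?_
    have h1 : 1 + j = j + 1 := by omega
    rw [h1, Nat.add_sub_cancel, dcount_succ, Nat.add_sub_cancel_left, mul_sum_list]
  simp only [step1]
  have step2 : ∀ x : ZMod n, ∑ j ∈ Finset.range l,
      (rows.map (fun r =>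
        (if j + 1 ≤ r.2 ∧ r.1 + (j : ZMod n) = x + 1 then 1 else 0) * dcount n rows x j)).sum
    = (rows.map (fun r => ∑ j ∈ Finset.range l,
        (if j + 1 ≤ r.2 ∧ r.1 + (j : ZMod n) = x + 1 then 1 else 0) * dcount n rows x j)).sum :=
    fun x => sum_list_comm rows (Finset.range l) _
  simp only [step2]
  rw [sum_list_comm]
  refine congrArg List.sum (List.map_congr_left fun r hr => ?_)
  rw [Finset.sum_comm]
  have key : ∀ j : ℕ, ∑ x : ZMod n,
      (if j + 1 ≤ r.2 ∧ r.1 + (j : ZMod n) = x + 1 then 1 else 0) * dcount n rows x j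
      = if j + 1 ≤ r.2 then dcount n rows (r.1 + (j : ZMod n) - 1) j else 0 := by
    intro j
    by_cases h : j + 1 ≤ r.2
    · rw [Finset.sum_eq_single (r.1 + (j : ZMod n) - 1)]
      · rw [if_pos ⟨h, by ring⟩, one_mul, if_pos h]
      · intro b _ hb
        rw [if_neg, zero_mul]
        rintro ⟨-, hc⟩
        exact hb (eq_sub_of_add_eq hc.symm)
      · intro hmem; exact absurd (Finset.mem_univ _) hmem
    · simp [h]
  simp only [key]
  rw [← Finset.sum_filter]
  have hf : (Finset.range l).filter (fun j => j + 1 ≤ r.2) = Finset.range r.2 := by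
    ext j
    simp only [Finset.mem_filter, Finset.mem_range]
    have := hrows r hr
    omega
  rw [hf]
  rcases hm : r.2 with _ | m
  · simp
  · rw [Finset.sum_range_succ', Nat.cast_zero, add_zero, dcount_zero, add_zero,
      Nat.add_sub_cancel]
    refine Finset.sum_congr rfl fun j _ => ?_
    congr 1
    push_cast
    ring
end

section
/- Let λ = [i₁;l₁) ⊕ [i₂;l₂) be a two-row multisegment for the cyclic quiver with n vertices, with l₁ ≥ l₂ ≥ 0. Then ε(λ) = ⌈l₁/n⌉ + ⌈l₂/n⌉ + ⌈(l₂ - {i₁ - i₂ + l₁ - 1})/n⌉ + ⌈(l₂ - {i₁ - i₂})/n⌉, where {m} denotes the representative of m mod n in {0,...,n-1}. -/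
/-- `ε(λ) = ∑_{rows R of λ} d_{(last label of R)}(λ^{≤|R|})`; an empty row
contributes `0` since `λ^{≤0}` has no boxes. -/
def epsMS (n : ℕ) (rows : List (ZMod n × ℕ)) : ℕ :=
  (rows.map (fun r => dcount n rows (r.1 + ((r.2 - 1 : ℕ) : ZMod n)) r.2)).sum

open Finset

theorem Finset.card_filter_range_natCast_eq_reflect {R : Type*} [AddCommGroupWithOne R]
    [DecidableEq R] (v : R) (m : ℕ) :
    #{j ∈ range m | ((j : ℕ) : R) = v} =
      #{j ∈ range m | ((j : ℕ) : R) = ((m - 1 : ℕ) : R) - v} := by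
  rw [card_filter, card_filter, ← sum_range_reflect]
  refine sum_congr rfl fun j hj => ?_
  have hj : j ≤ m - 1 := Nat.le_pred_of_lt (mem_range.mp hj)
  refine if_congr ?_ rfl rfl
  rw [Nat.cast_sub hj, sub_eq_iff_eq_add, eq_sub_iff_add_eq, add_comm, eq_comm]

namespace ZMod

variable {n : ℕ} [NeZero n]

theorem card_filter_range_natCast_eq_ceil (v : ZMod n) (m : ℕ) :
    (#{j ∈ range m | ((j : ℕ) : ZMod n) = v} : ℤ) = ⌈((m : ℚ) - v.val) / n⌉ := by
  have hv : v.val % n = v.val := Nat.mod_eq_of_lt v.val_lt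
  rw [← hv, ← Nat.count_modEq_card_eq_ceil m (NeZero.pos n), Nat.count_eq_card_filter_range]
  simp_rw [← natCast_eq_natCast_iff, natCast_zmod_val]

theorem card_filter_range_add_natCast_eq_ceil (c i : ZMod n) (m : ℕ) :
    (#{j ∈ range m | c + ((j : ℕ) : ZMod n) = i} : ℤ) = ⌈((m : ℚ) - (i - c).val) / n⌉ := by
  simp_rw [← card_filter_range_natCast_eq_ceil, eq_sub_iff_add_eq']

theorem card_filter_range_add_natCast_eq_add_pred_ceil (c d : ZMod n) (m : ℕ) :
    (#{j ∈ range m | c + ((j : ℕ) : ZMod n) = d + ((m - 1 : ℕ) : ZMod n)} : ℤ) =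
      ⌈((m : ℚ) - (c - d).val) / n⌉ := by
  have hreflect : ((m - 1 : ℕ) : ZMod n) - (d + ((m - 1 : ℕ) : ZMod n) - c) = c - d := by ring
  rw [card_filter_range_add_natCast_eq_ceil, ← card_filter_range_natCast_eq_ceil,
    card_filter_range_natCast_eq_reflect, hreflect, card_filter_range_natCast_eq_ceil]

theorem card_filter_range_add_natCast_eq_add_pred_ceil_of_le (c d : ZMod n) {k m : ℕ}
    (h : k ≤ m) :
    (#{j ∈ range k | d + ((j : ℕ) : ZMod n) = c + ((m - 1 : ℕ) : ZMod n)} : ℤ) =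
      ⌈((k : ℚ) - (c - d + (m : ZMod n) - 1).val) / n⌉ := by
  -- for `m = 0` the truncated `m - 1` is `0` rather than `-1`, but then `k = 0`
  obtain rfl | hm := Nat.eq_zero_or_pos m
  · obtain rfl := Nat.le_zero.mp h
    simp_rw [← card_filter_range_natCast_eq_ceil, range_zero, filter_empty]
  have hlabel : c + ((m - 1 : ℕ) : ZMod n) - d = c - d + (m : ZMod n) - 1 := by
    rw [Nat.cast_sub hm, Nat.cast_one]
    ring
  rw [card_filter_range_add_natCast_eq_ceil, hlabel]

end ZMod

/-- for the two-row multisegment `λ = [i₁;l₁) ⊕ [i₂;l₂)` with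
`l₁ ≥ l₂ ≥ 0`,
`ε(λ) = ⌈l₁/n⌉ + ⌈l₂/n⌉ + ⌈(l₂ - {i₁-i₂+l₁-1})/n⌉ + ⌈(l₂ - {i₁-i₂})/n⌉`,
where `{m}` denotes the representative of `m` mod `n` in `{0,…,n-1}`. -/
theorem stmt_2 (n : ℕ) [NeZero n] (i₁ i₂ : ZMod n) (l₁ l₂ : ℕ) (h : l₂ ≤ l₁) :
    (epsMS n [(i₁, l₁), (i₂, l₂)] : ℤ) =
      ⌈(l₁ : ℚ) / n⌉ + ⌈(l₂ : ℚ) / n⌉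
      + ⌈((l₂ : ℚ) - ((i₁ - i₂ + (l₁ : ZMod n) - 1).val : ℚ)) / n⌉
      + ⌈((l₂ : ℚ) - ((i₁ - i₂).val : ℚ)) / n⌉ := by
  simp only [epsMS, dcount, List.map_cons, List.map_nil, List.sum_cons, List.sum_nil, add_zero,
    min_self, min_eq_left h, min_eq_right h]
  push_cast
  rw [ZMod.card_filter_range_add_natCast_eq_add_pred_ceil,
    ZMod.card_filter_range_add_natCast_eq_add_pred_ceil_of_le _ _ h,
    ZMod.card_filter_range_add_natCast_eq_add_pred_ceil,
    ZMod.card_filter_range_add_natCast_eq_add_pred_ceil]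
  simp only [sub_self, ZMod.val_zero, Nat.cast_zero, sub_zero]
  ring
end

section
/- For n = 2 and any I-labelled Young diagram λ with underlying partition λ of size d = d₀ + d₁ (where d_i counts boxes labelled i), one has ε(λ) = ((d₀ - d₁)² + ε(λ_{underlying}))/2, where ε of a partition μ (the n = 1 case) equals 2n(μ) + |μ| with n(μ) = ∑_k (k-1)μ_k. -/
/-- Total number of boxes labelled `i`. -/
def dtot (n : ℕ) (rows : List (ZMod n × ℕ)) (i : ZMod n) : ℕ :=
  (rows.map (fun r =>
    ((Finset.range r.2).filter (fun (j : ℕ) => r.1 + (j : ZMod n) = i)).card)).sum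


/-!
For `n = 2` the labels along a row alternate, so a row starting at `a` holds
`(m + (±1)(m mod 2)) / 2` boxes labelled `i` among its first `m` boxes, the sign being `+`
iff `a = i`. Write `ε(λ)` as a sum over ordered pairs of rows `(R, S)` of the number of boxes
of `S` in the first `min(|R|, |S|)` columns carrying the last label of `R`. The contributions
of `(R, S)` and `(S, R)` add up to `min(|R|, |S|) + e_R e_S`, where `e_R ∈ {0, ±1}` is the
number of `0`-boxes minus the number of `1`-boxes of `R`. Summing over all pairs gives
`2 ε(λ) = ∑_{i,j} min(λ_i, λ_j) + (d₀ - d₁)²`, and `∑_{i,j} min(λ_i, λ_j) = 2 n(λ) + |λ|`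
for a partition.
-/

theorem List.sum_map_sum_map_comm {α β M : Type*} [AddCommMonoid M] (l : List α) (l' : List β)
    (f : α → β → M) :
    (l.map fun a => (l'.map fun b => f a b).sum).sum
      = (l'.map fun b => (l.map fun a => f a b).sum).sum := by
  simpa using Multiset.sum_map_sum_map (l : Multiset α) (l' : Multiset β) (f := f)

theorem List.sum_map_zipIdx_succ (L : List ℕ) (k : ℕ) :
    ((L.zipIdx (k + 1)).map fun p => p.2 * p.1).sum
      = ((L.zipIdx k).map fun p => p.2 * p.1).sum + L.sum := by
  induction L generalizing k with
  | nil => rfl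
  | cons x t ih => simp only [List.zipIdx_cons, List.map_cons, List.sum_cons, ih]; ring

theorem List.sum_map_sum_map_min_of_pairwise_ge (L : List ℕ) (h : L.Pairwise (· ≥ ·)) :
    (L.map fun x => (L.map fun y => min x y).sum).sum
      = 2 * (L.zipIdx.map fun p => p.2 * p.1).sum + L.sum := by
  induction L with
  | nil => rfl
  | cons x t ih =>
    obtain ⟨hx, ht⟩ := List.pairwise_cons.mp h
    have hmin_left : (t.map fun y => min x y) = t := by
      conv_rhs => rw [← List.map_id t]
      exact List.map_congr_left fun y hy => min_eq_right (hx y hy)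
    have hmin_right : (t.map fun z => (min z x + (t.map fun y => min z y).sum))
        = t.map fun z => z + (t.map fun y => min z y).sum :=
      List.map_congr_left fun z hz => by rw [min_eq_left (hx z hz)]
    simp only [List.map_cons, List.sum_cons, min_self, hmin_left, hmin_right,
      List.sum_map_add, List.map_id', ih ht, List.zipIdx_cons, List.sum_map_zipIdx_succ]
    ring

def labelCount {n : ℕ} (a i : ZMod n) (m : ℕ) : ℕ :=
  ((Finset.range m).filter (fun (j : ℕ) => a + (j : ZMod n) = i)).card

theorem labelCount_succ {n : ℕ} (a i : ZMod n) (m : ℕ) :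
    labelCount a i (m + 1) = labelCount a i m + if a + (m : ZMod n) = i then 1 else 0 := by
  simp only [labelCount, Finset.range_add_one, Finset.filter_insert]
  split_ifs
  · exact Finset.card_insert_of_notMem (by simp)
  · rfl

def parSign (x : ZMod 2) : ℤ := if x = 0 then 1 else -1

theorem parSign_add (x y : ZMod 2) : parSign (x + y) = parSign x * parSign y := by
  revert x y; decide

theorem parSign_natCast (k : ℕ) : parSign k = 1 - 2 * ((k : ℤ) % 2) := by
  rw [← ZMod.natCast_mod]
  rcases Nat.mod_two_eq_zero_or_one k with h | h <;> simp [h, parSign] <;> omega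

theorem two_mul_labelCount (a i : ZMod 2) (m : ℕ) :
    2 * (labelCount a i m : ℤ) = m + parSign (a + i) * ((m : ℤ) % 2) := by
  induction m with
  | zero => simp [labelCount]
  | succ m ih =>
    have hstep : 2 * (if a + (m : ZMod 2) = i then 1 else 0 : ℤ)
        = 1 + parSign (a + i) * (((m : ℤ) + 1) % 2) - parSign (a + i) * ((m : ℤ) % 2) := by
      clear ih
      rw [← ZMod.natCast_mod m 2]
      rcases Nat.mod_two_eq_zero_or_one m with h | h <;>
      · rw [show ((m : ℤ) + 1) % 2 = 1 - (m : ℤ) % 2 by omega,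
          show (m : ℤ) % 2 = (m % 2 : ℕ) by omega, h]
        push_cast
        revert a i; decide
    rw [labelCount_succ]
    push_cast
    linarith

def lastLabel {n : ℕ} (r : ZMod n × ℕ) : ZMod n := r.1 + ((r.2 - 1 : ℕ) : ZMod n)

def rowCharge (r : ZMod 2 × ℕ) : ℤ := parSign r.1 * ((r.2 : ℤ) % 2)

theorem labelCount_zero_add_labelCount_one (a : ZMod 2) (m : ℕ) :
    labelCount a 0 m + labelCount a 1 m = m := by
  have h0 := two_mul_labelCount a 0 m
  have h1 := two_mul_labelCount a 1 m
  rw [add_zero] at h0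
  rw [parSign_add, show parSign 1 = -1 from rfl] at h1
  zify
  linarith

theorem labelCount_zero_sub_labelCount_one (a : ZMod 2) (m : ℕ) :
    (labelCount a 0 m : ℤ) - labelCount a 1 m = rowCharge (a, m) := by
  have h0 := two_mul_labelCount a 0 m
  have h1 := two_mul_labelCount a 1 m
  rw [add_zero] at h0
  rw [parSign_add, show parSign 1 = -1 from rfl] at h1
  rw [rowCharge]
  linarith

theorem Int.emod_two_mul_self (x : ℤ) : (x % 2) * (x % 2) = x % 2 := by
  rcases Int.emod_two_eq_zero_or_one x with h | h <;> simp [h]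

theorem labelCount_lastLabel_add_labelCount_lastLabel (r s : ZMod 2 × ℕ)
    (hr : 0 < r.2) (hs : 0 < s.2) :
    (labelCount s.1 (lastLabel r) (min s.2 r.2) : ℤ) + labelCount r.1 (lastLabel s) (min r.2 s.2)
      = min r.2 s.2 + rowCharge r * rowCharge s := by
  obtain ⟨a, l⟩ := r
  obtain ⟨b, k⟩ := s
  dsimp only at hr hs ⊢
  refine mul_left_cancel₀ (two_ne_zero (α := ℤ)) ?_
  rw [mul_add, two_mul_labelCount, two_mul_labelCount]
  simp only [lastLabel, rowCharge, parSign_add, parSign_natCast, min_comm k l]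
  push_cast [hr, hs]
  rw [show ((l : ℤ) - 1) % 2 = 1 - (l : ℤ) % 2 by omega,
    show ((k : ℤ) - 1) % 2 = 1 - (k : ℤ) % 2 by omega]
  -- with `p = l % 2`, `q = k % 2` and `min l k = l`, the parity terms are `p (2p + 2q - 2) = 2pq`
  rcases le_total l k with h | h
  · rw [min_eq_left (by exact_mod_cast h)]
    linear_combination (2 * parSign a * parSign b) * Int.emod_two_mul_self (l : ℤ)
  · rw [min_eq_right (by exact_mod_cast h)]
    linear_combination (2 * parSign a * parSign b) * Int.emod_two_mul_self (k : ℤ)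

theorem epsMS_eq_sum_labelCount {n : ℕ} (rows : List (ZMod n × ℕ)) :
    epsMS n rows = (rows.map fun r => (rows.map fun s =>
      labelCount s.1 (lastLabel r) (min s.2 r.2)).sum).sum := rfl

theorem dtot_eq_sum_labelCount {n : ℕ} (rows : List (ZMod n × ℕ)) (i : ZMod n) :
    dtot n rows i = (rows.map fun r => labelCount r.1 i r.2).sum := rfl

theorem two_mul_epsMS (rows : List (ZMod 2 × ℕ)) (hpos : ∀ r ∈ rows, 0 < r.2) :
    2 * (epsMS 2 rows : ℤ)
      = (((rows.map Prod.snd).map fun x =>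
          ((rows.map Prod.snd).map fun y => min x y).sum).sum : ℕ)
        + (rows.map rowCharge).sum ^ 2 := by
  let F : ZMod 2 × ℕ → ZMod 2 × ℕ → ℤ := fun r s =>
    labelCount s.1 (lastLabel r) (min s.2 r.2)
  have hε : (epsMS 2 rows : ℤ) = (rows.map fun r => (rows.map fun s => F r s).sum).sum := by
    simp [epsMS_eq_sum_labelCount, F, Nat.cast_list_sum, List.map_map, Function.comp_def]
  calc 2 * (epsMS 2 rows : ℤ)
      = (rows.map fun r => (rows.map fun s => F r s + F s r).sum).sum := by
        rw [two_mul, hε]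
        nth_rw 2 [List.sum_map_sum_map_comm]
        simp only [← List.sum_map_add]
    _ = (rows.map fun r =>
          (rows.map fun s => ((min r.2 s.2 : ℕ) : ℤ) + rowCharge r * rowCharge s).sum).sum := by
        refine congrArg List.sum (List.map_congr_left fun r hr => ?_)
        exact congrArg List.sum (List.map_congr_left fun s hs =>
          labelCount_lastLabel_add_labelCount_lastLabel r s (hpos r hr) (hpos s hs))
    _ = _ := by
        simp only [List.sum_map_add, sq, List.sum_map_mul_left, List.sum_map_mul_right,
          Nat.cast_list_sum, List.map_map, Function.comp_def]

theorem dtot_zero_add_dtot_one (rows : List (ZMod 2 × ℕ)) :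
    dtot 2 rows 0 + dtot 2 rows 1 = (rows.map Prod.snd).sum := by
  simp only [dtot_eq_sum_labelCount, ← List.sum_map_add, labelCount_zero_add_labelCount_one]

theorem dtot_zero_sub_dtot_one (rows : List (ZMod 2 × ℕ)) :
    (dtot 2 rows 0 : ℤ) - dtot 2 rows 1 = (rows.map rowCharge).sum := by
  simp only [dtot_eq_sum_labelCount, Nat.cast_list_sum, List.map_map, Function.comp_def,
    sub_eq_iff_eq_add, ← List.sum_map_add]
  exact congrArg List.sum (List.map_congr_left fun r _ =>
    eq_add_of_sub_eq (labelCount_zero_sub_labelCount_one r.1 r.2))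

/-- for `n = 2` and an `I`-labelled Young diagram `λ` (rows listed
in weakly decreasing order of length, all rows nonempty), with `d₀, d₁` the
numbers of boxes labelled `0` and `1`,
`ε(λ) = ((d₀ - d₁)² + ε(underlying partition))/2`, where for a partition `μ`
the `n = 1` value of `ε` is `2n(μ) + |μ|` with `n(μ) = ∑_k (k-1)μ_k`. -/
theorem stmt_3 (rows : List (ZMod 2 × ℕ))
    (hsorted : (rows.map Prod.snd).Pairwise (· ≥ ·))
    (hpos : ∀ r ∈ rows, 0 < r.2)
    (d₀ d₁ : ℕ) (hd₀ : d₀ = dtot 2 rows 0) (hd₁ : d₁ = dtot 2 rows 1)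
    (nμ : ℕ) (hnμ : nμ = ((rows.map Prod.snd).zipIdx.map (fun p => p.2 * p.1)).sum) :
    (epsMS 2 rows : ℚ) = (((d₀ : ℚ) - (d₁ : ℚ)) ^ 2 + (2 * nμ + (d₀ + d₁))) / 2 := by
  have hε := two_mul_epsMS rows hpos
  rw [List.sum_map_sum_map_min_of_pairwise_ge _ hsorted, ← hnμ, ← dtot_zero_add_dtot_one,
    ← dtot_zero_sub_dtot_one, ← hd₀, ← hd₁] at hε
  rw [eq_div_iff two_ne_zero, mul_comm, add_comm]
  exact_mod_cast hε
end

section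
/- Let n ≥ 1, λ = [i₁;l₁) ⊕ [i₂;l₂) with l₁ ≥ l₂ ≥ 0, and suppose μ = [i₁;m₁) ⊕ [i₂;m₂) has the same dimension vector as λ (i.e., for each j ∈ ℤ/nℤ, the number of boxes labelled j is equal). Then either (a) m₁ ≡ l₁ and m₂ ≡ l₂ (mod n), or (b) m₁ ≡ i₂ - i₁ + l₂ and m₂ ≡ i₁ - i₂ + l₁ (mod n). -/
/-!
Cutting the longer of `[i₁;m₁)`, `[i₁;l₁)` at the shorter one, the dimension-vector identity
reduces to the equality of the dimension vectors of two segments of the same length `t`, say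
`[i₂ + l₂; t)` and `[i₁ + m₁; t)`. For a segment `[s;t)` the difference `d_j - d_{j-1}` is
`[s = j] - [s + t = j]`, so when `t ≢ 0 (mod n)` the start `s` is the unique `j` with
`d_j > d_{j-1}` and the two segments start at the same residue: this is alternative (b).
Otherwise `t ≡ 0`, which is alternative (a).
-/

/-- The dimension vector of the segment `[i;l)`: `d_j = #{0 ≤ k < l : i + k = j}`
in `ℤ/nℤ`. -/
def dseg (n : ℕ) (i : ZMod n) (l : ℕ) (j : ZMod n) : ℕ :=
  ((Finset.range l).filter (fun (k : ℕ) => i + (k : ZMod n) = j)).card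

section Segment

variable {n : ℕ}

lemma dseg_zero (i j : ZMod n) : dseg n i 0 j = 0 := by
  simp [dseg]

lemma dseg_succ (i : ZMod n) (l : ℕ) (j : ZMod n) :
    dseg n i (l + 1) j = dseg n i l j + if i + (l : ZMod n) = j then 1 else 0 := by
  unfold dseg
  rw [Finset.range_add_one, Finset.filter_insert]
  split_ifs
  · rw [Finset.card_insert_of_notMem (by simp)]
  · rfl

lemma dseg_one (i j : ZMod n) : dseg n i 1 j = if i = j then 1 else 0 := by
  simp [dseg_succ, dseg_zero]

lemma dseg_add (i : ZMod n) (a t : ℕ) (j : ZMod n) :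
    dseg n i (a + t) j = dseg n i a j + dseg n (i + a) t j := by
  induction t with
  | zero => simp [dseg_zero]
  | succ t ih =>
    rw [← Nat.add_assoc, dseg_succ, ih, dseg_succ, Nat.add_assoc]
    push_cast
    rw [add_assoc]

lemma dseg_add_add (i : ZMod n) (l : ℕ) (j c : ZMod n) :
    dseg n (i + c) l (j + c) = dseg n i l j := by
  unfold dseg
  simp only [add_right_comm i c, add_left_inj]

lemma dseg_add_ite_eq_dseg_sub_one (i : ZMod n) (l : ℕ) (j : ZMod n) :
    dseg n i l j + (if i + (l : ZMod n) = j then 1 else 0) =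
      dseg n i l (j - 1) + if i = j then 1 else 0 := by
  have hshift : dseg n (i + 1) l j = dseg n i l (j - 1) := by
    simpa using dseg_add_add i l (j - 1) 1
  have h := dseg_add i 1 l j
  rw [Nat.add_comm 1 l, dseg_succ, dseg_one, Nat.cast_one, hshift] at h
  omega

lemma start_eq_of_dseg_eq {s s' : ZMod n} {t : ℕ} (ht : (t : ZMod n) ≠ 0)
    (h : ∀ j, dseg n s t j = dseg n s' t j) : s = s' := by
  have hs := dseg_add_ite_eq_dseg_sub_one s t s
  have hs' := dseg_add_ite_eq_dseg_sub_one s' t s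
  rw [h, h, if_neg (by simpa using ht), if_pos rfl] at hs
  by_contra hne
  rw [if_neg (Ne.symm hne)] at hs'
  split_ifs at hs' <;> omega

end Segment

lemma casts_eq_or_ends_swap_of_dseg_eq (n : ℕ) (i₁ i₂ : ZMod n) (l₁ l₂ m₁ m₂ t : ℕ)
    (h₁ : l₁ = m₁ + t) (h₂ : m₂ = l₂ + t)
    (hdim : ∀ j : ZMod n, dseg n i₁ m₁ j + dseg n i₂ m₂ j
      = dseg n i₁ l₁ j + dseg n i₂ l₂ j) :
    ((m₁ : ZMod n) = l₁ ∧ (m₂ : ZMod n) = l₂) ∨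
      (i₁ + m₁ = i₂ + l₂ ∧ i₂ + m₂ = i₁ + l₁) := by
  subst h₁ h₂
  by_cases ht : (t : ZMod n) = 0
  · left
    push_cast
    simp [ht]
  · right
    have hstart : i₂ + (l₂ : ZMod n) = i₁ + m₁ := by
      refine start_eq_of_dseg_eq ht fun j => ?_
      have h := hdim j
      rw [dseg_add, dseg_add] at h
      omega
    refine ⟨hstart.symm, ?_⟩
    push_cast
    linear_combination hstart

theorem stmt_5_general (n : ℕ) (i₁ i₂ : ZMod n) (l₁ l₂ m₁ m₂ : ℕ)
    (hsum : m₁ + m₂ = l₁ + l₂)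
    (hdim : ∀ j : ZMod n, dseg n i₁ m₁ j + dseg n i₂ m₂ j
      = dseg n i₁ l₁ j + dseg n i₂ l₂ j) :
    ((m₁ : ZMod n) = (l₁ : ZMod n) ∧ (m₂ : ZMod n) = (l₂ : ZMod n)) ∨
    ((m₁ : ZMod n) = i₂ - i₁ + (l₂ : ZMod n) ∧
     (m₂ : ZMod n) = i₁ - i₂ + (l₁ : ZMod n)) := by
  have key : ((m₁ : ZMod n) = l₁ ∧ (m₂ : ZMod n) = l₂) ∨
      (i₁ + m₁ = i₂ + l₂ ∧ i₂ + m₂ = i₁ + l₁) := by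
    rcases le_total m₁ l₁ with h | h
    · obtain ⟨t, rfl⟩ := Nat.exists_eq_add_of_le h
      exact casts_eq_or_ends_swap_of_dseg_eq n i₁ i₂ _ l₂ m₁ m₂ t rfl (by omega) hdim
    · obtain ⟨t, rfl⟩ := Nat.exists_eq_add_of_le h
      rcases casts_eq_or_ends_swap_of_dseg_eq n i₁ i₂ _ m₂ l₁ l₂ t rfl (by omega)
        (fun j => (hdim j).symm) with ⟨e₁, e₂⟩ | ⟨e₁, e₂⟩
      · exact .inl ⟨e₁.symm, e₂.symm⟩
      · exact .inr ⟨e₂.symm, e₁.symm⟩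
  rcases key with h | ⟨e₁, e₂⟩
  · exact .inl h
  · exact .inr ⟨by linear_combination e₁, by linear_combination e₂⟩

/-- if `λ = [i₁;l₁) ⊕ [i₂;l₂)` with `l₁ ≥ l₂ ≥ 0` and
`μ = [i₁;m₁) ⊕ [i₂;m₂)` with `m₁ + m₂ = l₁ + l₂` has the same dimension vector
as `λ`, then either (a) `m₁ ≡ l₁` and `m₂ ≡ l₂ (mod n)`, or
(b) `m₁ ≡ i₂ - i₁ + l₂` and `m₂ ≡ i₁ - i₂ + l₁ (mod n)`. -/
theorem stmt_5 (n : ℕ) (i₁ i₂ : ZMod n) (l₁ l₂ m₁ m₂ : ℕ)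
    (hl : l₂ ≤ l₁) (hsum : m₁ + m₂ = l₁ + l₂)
    (hdim : ∀ j : ZMod n, dseg n i₁ m₁ j + dseg n i₂ m₂ j
      = dseg n i₁ l₁ j + dseg n i₂ l₂ j) :
    ((m₁ : ZMod n) = (l₁ : ZMod n) ∧ (m₂ : ZMod n) = (l₂ : ZMod n)) ∨
    ((m₁ : ZMod n) = i₂ - i₁ + (l₂ : ZMod n) ∧
     (m₂ : ZMod n) = i₁ - i₂ + (l₁ : ZMod n)) :=
  stmt_5_general n i₁ i₂ l₁ l₂ m₁ m₂ hsum hdim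
end

section
/- With λ = [i;l₁) ⊕ [i;l₂), l₁ ≥ l₂, l₁ ≡ l₂ mod n, and μ_j = [i;l₁ - jn) ⊕ [i;l₂ + jn) for 0 ≤ j ≤ ⌊s/2⌋ where s = (l₁-l₂)/n: ε(μ_{j+1}) = ε(μ_j) + 2 for each j with j + 1 ≤ ⌊s/2⌋ (each step in the chain has codimension 2). -/
/-- `ε` of the two-row multisegment `[i₁;l₁) ⊕ [i₂;l₂)` (with `l₁ ≥ l₂`),
given by the formula
`ε = ⌈l₁/n⌉ + ⌈l₂/n⌉ + ⌈(l₂ - {i₁-i₂+l₁-1})/n⌉ + ⌈(l₂ - {i₁-i₂})/n⌉`,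
where `{m} ∈ {0,…,n-1}` represents `m` mod `n`. -/
def epsTwo (n : ℕ) [NeZero n] (i₁ i₂ : ZMod n) (l₁ l₂ : ℕ) : ℤ :=
  ⌈(l₁ : ℚ) / n⌉ + ⌈(l₂ : ℚ) / n⌉
    + ⌈((l₂ : ℚ) - ((i₁ - i₂ + (l₁ : ZMod n) - 1).val : ℚ)) / n⌉
    + ⌈((l₂ : ℚ) - ((i₁ - i₂).val : ℚ)) / n⌉

section CeilDiv

variable {K : Type*} [Field K] [LinearOrder K] [IsStrictOrderedRing K] [FloorRing K]
  {a : K}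

theorem ceil_add_div_self (ha : a ≠ 0) (x : K) : ⌈(x + a) / a⌉ = ⌈x / a⌉ + 1 := by
  rw [add_div, div_self ha, Int.ceil_add_one]

theorem ceil_sub_div_self (ha : a ≠ 0) (x : K) : ⌈(x - a) / a⌉ = ⌈x / a⌉ - 1 := by
  rw [sub_div, div_self ha, Int.ceil_sub_one]

end CeilDiv

/-- Moving `n` from the first row to the second leaves `l₁ mod n` unchanged, so every ceiling
in `ε` shifts by one: the first goes down, the other three go up. -/
theorem epsTwo_sub_add_self (n : ℕ) [NeZero n] (i₁ i₂ : ZMod n) {l₁ : ℕ} (l₂ : ℕ)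
    (h : n ≤ l₁) : epsTwo n i₁ i₂ (l₁ - n) (l₂ + n) = epsTwo n i₁ i₂ l₁ l₂ + 2 := by
  have hn : (n : ℚ) ≠ 0 := Nat.cast_ne_zero.mpr (NeZero.ne n)
  simp only [epsTwo, Nat.cast_sub h, Nat.cast_add, ZMod.natCast_self, sub_zero,
    ceil_sub_div_self hn, ceil_add_div_self hn, add_sub_right_comm _ (n : ℚ)]
  ring

theorem stmt_10_general (n : ℕ) [NeZero n] (i : ZMod n) (l₁ l₂ : ℕ)
    (s : ℕ) (hs : s = (l₁ - l₂) / n)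
    (j : ℕ) (hj : j + 1 ≤ s / 2) :
    epsTwo n i i (l₁ - (j + 1) * n) (l₂ + (j + 1) * n)
      = epsTwo n i i (l₁ - j * n) (l₂ + j * n) + 2 := by
  have hjn : (j + 1) * n ≤ l₁ :=
    calc (j + 1) * n ≤ s * n := Nat.mul_le_mul_right n (by omega)
      _ ≤ l₁ - l₂ := hs ▸ Nat.div_mul_le_self _ n
      _ ≤ l₁ := Nat.sub_le l₁ l₂
  rw [Nat.succ_mul] at hjn ⊢
  rw [← Nat.sub_sub, ← add_assoc]
  exact epsTwo_sub_add_self n i i (l₂ + j * n) (Nat.le_sub_of_add_le' hjn)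

/-- in Case 1 (`λ = [i;l₁) ⊕ [i;l₂)`, `l₁ ≥ l₂`,
`l₁ ≡ l₂ mod n`), with `μ_j = [i;l₁ - jn) ⊕ [i;l₂ + jn)` for
`0 ≤ j ≤ ⌊s/2⌋`, `s = (l₁-l₂)/n`, each link of the chain has codimension 2:
`ε(μ_{j+1}) = ε(μ_j) + 2`. -/
theorem stmt_10 (n : ℕ) [NeZero n] (i : ZMod n) (l₁ l₂ : ℕ) (hl : l₂ ≤ l₁)
    (hmod : l₁ % n = l₂ % n) (s : ℕ) (hs : s = (l₁ - l₂) / n)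
    (j : ℕ) (hj : j + 1 ≤ s / 2) :
    epsTwo n i i (l₁ - (j + 1) * n) (l₂ + (j + 1) * n)
      = epsTwo n i i (l₁ - j * n) (l₂ + j * n) + 2 :=
  stmt_10_general n i l₁ l₂ s hs j hj
end

section
/- Uniqueness of decomposition data: Let P be a finite poset with a strictly order-reversing function ε: P → ℤ, and suppose given g_{λ,μ} ∈ ℂ[t] for all λ ≥ μ in P. Suppose (b_{λ,μ,j})_{j∈ℤ} and L_{λ,μ} ∈ ℂ[t] satisfy: (1) g_{λ,μ}(t) = ∑_{λ ≥ ν ≥ μ} (∑_{j ≡ ε(ν)-ε(λ) mod 2} b_{λ,ν,j} t^{(ε(ν)-ε(λ)-j)/2}) L_{ν,μ}(t); (2) b_{λ,λ,j} = δ_{j,0}; (3) b_{λ,μ,j} = b_{λ,μ,-j}; (4) b_{λ,μ,j} = 0 if j ≢ ε(μ)-ε(λ) mod 2; (5) L_{λ,λ} = 1; (6) deg L_{λ,μ} < (ε(μ)-ε(λ))/2 for μ < λ. Then the data (b, L) is uniquely determined by g. -/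
/-!
Induct on the pair `(λ, μ)` in the product order of `P × Pᵒᵈ`. In the expansion (1) of
`g λ μ` every term with `μ < ν < λ` is already determined, so the two solutions satisfy
`S + L λ μ = S' + L' λ μ`, where `S = ∑ⱼ b λ μ j t^{(d-j)/2}` and `d = ε μ - ε λ`.
The coefficient of `tᵐ` in `S' - S` is `(b' - b)(d - 2m)`, which is invariant under
`m ↦ d - m` by (3); the coefficient of `tᵐ` in `L λ μ - L' λ μ` vanishes for `2m ≥ d`
by (6). As these two Laurent polynomials agree, all their coefficients vanish.
-/

open LaurentPolynomial Polynomial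

/-- `(b, L)` is a solution of the system of conditions (1)–(6) of Lemma 4.2:
`P` is a finite poset, `ε : P → ℤ` (strictly order-reversing in the theorem),
`g` the given family of polynomials.  Condition (1) is written in the ring of
Laurent polynomials, the inner sum over `j ∈ ℤ` being a `finsum` (the supports
are required to be finite), with the monomial `t^{(ε(ν)-ε(λ)-j)/2}` occurring
exactly for `j ≡ ε(ν)-ε(λ) (mod 2)`. -/
def IsSol {P : Type*} [PartialOrder P] [Fintype P]
    [DecidableRel (fun a b : P => a ≤ b)]
    (ε : P → ℤ) (g : P → P → Polynomial ℂ)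
    (b : P → P → ℤ → ℂ) (L : P → P → Polynomial ℂ) : Prop :=
  (∀ lam mu, (Function.support (b lam mu)).Finite) ∧
  -- (1)
  (∀ lam mu : P, mu ≤ lam →
    (g lam mu).toLaurent =
      ∑ ν ∈ Finset.univ.filter (fun ν => mu ≤ ν ∧ ν ≤ lam),
        (∑ᶠ j : ℤ,
          if (ε ν - ε lam - j) % 2 = 0 then
            b lam ν j • LaurentPolynomial.T (R := ℂ) ((ε ν - ε lam - j) / 2)
          else 0) * (L ν mu).toLaurent) ∧
  -- (2)
  (∀ lam : P, ∀ j : ℤ, b lam lam j = if j = 0 then 1 else 0) ∧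
  -- (3)
  (∀ lam mu : P, ∀ j : ℤ, b lam mu j = b lam mu (-j)) ∧
  -- (4)
  (∀ lam mu : P, ∀ j : ℤ, (ε mu - ε lam - j) % 2 ≠ 0 → b lam mu j = 0) ∧
  -- (5)
  (∀ lam : P, L lam lam = 1) ∧
  -- (6)
  (∀ lam mu : P, mu < lam → 2 * ((L lam mu).natDegree : ℤ) < ε mu - ε lam)

noncomputable def halfSeries {R : Type*} [Semiring R] (d : ℤ) (c : ℤ → R) : R[T;T⁻¹] :=
  ∑ᶠ j : ℤ, if (d - j) % 2 = 0 then c j • T ((d - j) / 2) else 0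

section HalfSeries

variable {R : Type*}

lemma coeff_halfSeries [Semiring R] (d : ℤ) {c : ℤ → R} (hc : c.support.Finite) (m : ℤ) :
    (halfSeries d c).coeff m = c (d - 2 * m) := by
  have hsupp : (Function.support fun j =>
      if (d - j) % 2 = 0 then c j • (T ((d - j) / 2) : R[T;T⁻¹]) else 0) ⊆ c.support := by
    intro j hj
    contrapose! hj
    simp [Function.notMem_support.mp hj]
  have hcoeff : (halfSeries d c).coeff m = ∑ᶠ j : ℤ,
      (if (d - j) % 2 = 0 then c j • (T ((d - j) / 2) : R[T;T⁻¹]) else 0).coeff m :=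
    ((Finsupp.applyAddHom m).comp
      (AddMonoidAlgebra.coeffAddEquiv (R := R) (M := ℤ)).toAddMonoidHom).map_finsum
        (hc.subset hsupp)
  rw [hcoeff, finsum_eq_single _ (d - 2 * m)]
  · rw [if_pos (by omega), AddMonoidAlgebra.coeff_smul_apply, T_apply, if_pos (by omega)]
    simp
  · intro j hj
    split_ifs with hpar
    · rw [AddMonoidAlgebra.coeff_smul_apply, T_apply, if_neg (by omega), smul_zero]
    · rfl

lemma halfSeries_zero_indicator_zero [Semiring R] :
    halfSeries 0 (fun j : ℤ => if j = 0 then (1 : R) else 0) = 1 := by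
  have hfin : (Function.support fun j : ℤ => if j = 0 then (1 : R) else 0).Finite :=
    (Set.finite_singleton 0).subset fun j hj => by_contra fun hj0 => hj (if_neg hj0)
  ext m
  rw [coeff_halfSeries 0 hfin, ← T_zero, T_apply]
  split_ifs <;> first | rfl | omega

lemma coeff_toLaurent_eq_zero_of_natDegree_lt [Semiring R] (f : R[X]) {m : ℤ}
    (hm : (f.natDegree : ℤ) < m) : f.toLaurent.coeff m = 0 := by
  by_contra hne
  have hmem : m ∈ f.toLaurent.coeff.support := Finsupp.mem_support_iff.mpr hne
  rw [support_coeff_toLaurent] at hmem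
  obtain ⟨k, hk, rfl⟩ := Finset.mem_map.mp hmem
  have := le_natDegree_of_mem_supp k hk
  simp only [Nat.castEmbedding_apply] at hm
  omega

lemma eq_of_halfSeries_add_toLaurent_eq [CommRing R] {d : ℤ} {c c' : ℤ → R} {f f' : R[X]}
    (hc : c.support.Finite) (hc' : c'.support.Finite)
    (hsymm : ∀ j, c j = c (-j)) (hsymm' : ∀ j, c' j = c' (-j))
    (hpar : ∀ j, (d - j) % 2 ≠ 0 → c j = 0) (hpar' : ∀ j, (d - j) % 2 ≠ 0 → c' j = 0)
    (hf : 2 * (f.natDegree : ℤ) < d) (hf' : 2 * (f'.natDegree : ℤ) < d)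
    (h : halfSeries d c + f.toLaurent = halfSeries d c' + f'.toLaurent) :
    c = c' ∧ f = f' := by
  have hcoeff (m : ℤ) :
      c (d - 2 * m) + f.toLaurent.coeff m = c' (d - 2 * m) + f'.toLaurent.coeff m := by
    simpa [coeff_halfSeries d hc, coeff_halfSeries d hc'] using
      congrArg (fun p : R[T;T⁻¹] => p.coeff m) h
  have hhigh (m : ℤ) (hm : d ≤ 2 * m) : c (d - 2 * m) = c' (d - 2 * m) := by
    simpa only [coeff_toLaurent_eq_zero_of_natDegree_lt f (m := m) (by omega),
      coeff_toLaurent_eq_zero_of_natDegree_lt f' (m := m) (by omega), add_zero]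
      using hcoeff m
  have hall (m : ℤ) : c (d - 2 * m) = c' (d - 2 * m) := by
    rcases le_or_gt d (2 * m) with hm | hm
    · exact hhigh m hm
    · have hrefl : d - 2 * (d - m) = -(d - 2 * m) := by ring
      rw [hsymm, hsymm', ← hrefl]
      exact hhigh (d - m) (by omega)
  refine ⟨funext fun j => ?_, toLaurent_injective (LaurentPolynomial.ext fun m => ?_)⟩
  · by_cases hj : (d - j) % 2 = 0
    · obtain ⟨m, rfl⟩ : ∃ m, j = d - 2 * m := ⟨(d - j) / 2, by omega⟩
      exact hall m
    · rw [hpar j hj, hpar' j hj]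
  · simpa [hall m] using hcoeff m

end HalfSeries

lemma Finset.add_eq_add_of_sum_eq {ι M : Type*} [AddCommGroup M] [DecidableEq ι]
    {s : Finset ι} {f f' : ι → M} {a b : ι} (hab : a ≠ b) (ha : a ∈ s) (hb : b ∈ s)
    (hrest : ∀ i ∈ s, i ≠ a → i ≠ b → f i = f' i)
    (hsum : ∑ i ∈ s, f i = ∑ i ∈ s, f' i) : f a + f b = f' a + f' b := by
  have hsub : ({a, b} : Finset ι) ⊆ s :=
    Finset.insert_subset ha (Finset.singleton_subset_iff.mpr hb)
  have hdiff : ∑ i ∈ s, (f i - f' i) = ∑ i ∈ {a, b}, (f i - f' i) := by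
    refine (Finset.sum_subset hsub fun i hi hnot => ?_).symm
    simp only [Finset.mem_insert, Finset.mem_singleton, not_or] at hnot
    rw [hrest i hi hnot.1 hnot.2, sub_self]
  rw [Finset.sum_sub_distrib, hsum, sub_self, Finset.sum_pair hab] at hdiff
  rw [← sub_eq_zero, hdiff]
  abel

namespace IsSol

variable {P : Type*} [PartialOrder P] [Fintype P] [DecidableRel (fun a b : P => a ≤ b)]
  {ε : P → ℤ} {g : P → P → ℂ[X]} {b b' : P → P → ℤ → ℂ}
  {L L' : P → P → ℂ[X]}

lemma halfSeries_self (h : IsSol ε g b L) (lam : P) :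
    halfSeries (ε lam - ε lam) (b lam lam) = 1 := by
  obtain ⟨-, -, hb_diag, -⟩ := h
  rw [funext (hb_diag lam), sub_self]
  exact halfSeries_zero_indicator_zero

lemma L_self (h : IsSol ε g b L) (lam : P) : L lam lam = 1 :=
  h.2.2.2.2.2.1 lam

lemma eq_on_diag (h : IsSol ε g b L) (h' : IsSol ε g b' L') (lam : P) :
    b lam lam = b' lam lam ∧ L lam lam = L' lam lam :=
  ⟨funext fun j => by rw [h.2.2.1, h'.2.2.1], by rw [h.L_self, h'.L_self]⟩

lemma halfSeries_add_toLaurent_eq (h : IsSol ε g b L) (h' : IsSol ε g b' L') {lam mu : P}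
    (hlt : mu < lam)
    (hb : ∀ ν, mu < ν → ν ≤ lam → b lam ν = b' lam ν)
    (hL : ∀ ν, mu ≤ ν → ν < lam → L ν mu = L' ν mu) :
    halfSeries (ε mu - ε lam) (b lam mu) + (L lam mu).toLaurent =
      halfSeries (ε mu - ε lam) (b' lam mu) + (L' lam mu).toLaurent := by
  classical
  have hpair := Finset.add_eq_add_of_sum_eq
    (f := fun ν => halfSeries (ε ν - ε lam) (b lam ν) * (L ν mu).toLaurent)
    (f' := fun ν => halfSeries (ε ν - ε lam) (b' lam ν) * (L' ν mu).toLaurent)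
    hlt.ne (by simpa using hlt.le) (by simpa using hlt.le)
    (fun ν hν hνmu hνlam => by
      simp only [Finset.mem_filter, Finset.mem_univ, true_and] at hν
      rw [hb ν (lt_of_le_of_ne hν.1 (Ne.symm hνmu)) hν.2,
        hL ν hν.1 (lt_of_le_of_ne hν.2 hνlam)])
    ((h.2.1 lam mu hlt.le).symm.trans (h'.2.1 lam mu hlt.le))
  simpa only [h.L_self, h'.L_self, h.halfSeries_self, h'.halfSeries_self,
    toLaurent_one, mul_one, one_mul] using hpair

lemma eq_of_lt (h : IsSol ε g b L) (h' : IsSol ε g b' L') {lam mu : P} (hlt : mu < lam)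
    (hb : ∀ ν, mu < ν → ν ≤ lam → b lam ν = b' lam ν)
    (hL : ∀ ν, mu ≤ ν → ν < lam → L ν mu = L' ν mu) :
    b lam mu = b' lam mu ∧ L lam mu = L' lam mu := by
  have hsplit := h.halfSeries_add_toLaurent_eq h' hlt hb hL
  obtain ⟨hfin, -, -, hsymm, hpar, -, hdeg⟩ := h
  obtain ⟨hfin', -, -, hsymm', hpar', -, hdeg'⟩ := h'
  exact eq_of_halfSeries_add_toLaurent_eq (hfin lam mu) (hfin' lam mu) (hsymm lam mu)
    (hsymm' lam mu) (hpar lam mu) (hpar' lam mu) (hdeg lam mu hlt) (hdeg' lam mu hlt) hsplit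

end IsSol

theorem stmt_11_general {P : Type*} [PartialOrder P] [Fintype P]
    [DecidableRel (fun a b : P => a ≤ b)]
    (ε : P → ℤ)
    (g : P → P → Polynomial ℂ)
    (b b' : P → P → ℤ → ℂ) (L L' : P → P → Polynomial ℂ)
    (h : IsSol ε g b L) (h' : IsSol ε g b' L') :
    ∀ lam mu : P, mu ≤ lam →
      (∀ j : ℤ, b lam mu j = b' lam mu j) ∧ L lam mu = L' lam mu := by
  suffices H : ∀ x : P × Pᵒᵈ, OrderDual.ofDual x.2 ≤ x.1 →
      b x.1 (OrderDual.ofDual x.2) = b' x.1 (OrderDual.ofDual x.2) ∧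
        L x.1 (OrderDual.ofDual x.2) = L' x.1 (OrderDual.ofDual x.2) from
    fun lam mu hle => (H (lam, OrderDual.toDual mu) hle).imp funext_iff.mp id
  intro x
  induction x using WellFoundedLT.induction with
  | _ x ih =>
  obtain ⟨lam, mu⟩ := x
  cases mu using OrderDual.rec with | _ mu =>
  intro (hle : mu ≤ lam)
  show b lam mu = b' lam mu ∧ L lam mu = L' lam mu
  rcases hle.eq_or_lt with rfl | hlt
  · exact h.eq_on_diag h' mu
  refine h.eq_of_lt h' hlt (fun ν hν hνlam => ?_) (fun ν hν hνlam => ?_)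
  · exact (ih (lam, OrderDual.toDual ν) (Prod.mk_lt_mk_iff_right.mpr hν) hνlam).1
  · exact (ih (ν, OrderDual.toDual mu) (Prod.mk_lt_mk_iff_left.mpr hνlam) hν).2

/-- uniqueness of the decomposition data: if `ε` is strictly
order-reversing and `(b, L)`, `(b', L')` both satisfy conditions (1)–(6)
for the same `g`, then `b = b'` and `L = L'` on all pairs `μ ≤ λ`. -/
theorem stmt_11 {P : Type*} [PartialOrder P] [Fintype P]
    [DecidableRel (fun a b : P => a ≤ b)]
    (ε : P → ℤ) (hε : ∀ mu lam : P, mu < lam → ε lam < ε mu)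
    (g : P → P → Polynomial ℂ)
    (b b' : P → P → ℤ → ℂ) (L L' : P → P → Polynomial ℂ)
    (h : IsSol ε g b L) (h' : IsSol ε g b' L') :
    ∀ lam mu : P, mu ≤ lam →
      (∀ j : ℤ, b lam mu j = b' lam mu j) ∧ L lam mu = L' lam mu :=
  stmt_11_general ε g b b' L L' h h'
end

section
/- For the Case 2 chain (i₁ = i₂ = i, l₁ ≢ l₂ mod n), with ε as given by the two-row formula, consecutive elements of the chain [i;l₁)⊕[i;l₂) → [i;l₁-{l₁-l₂})⊕[i;l₂+{l₁-l₂}) satisfy ε(successor) = ε(predecessor) + 1 (codimension 1 at each link). -/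
section CeilDiv

variable {K : Type*} [Field K] [LinearOrder K] [IsOrderedRing K] [FloorRing K]

theorem ceil_add_mul_div (x d : K) (k : ℤ) (hd : d ≠ 0) : ⌈(x + d * k) / d⌉ = ⌈x / d⌉ + k := by
  rw [add_div, mul_div_cancel_left₀ _ hd, Int.ceil_add_intCast]

theorem ceil_div_eq_one {r d : K} (hr : 0 < r) (hrd : r ≤ d) : ⌈r / d⌉ = 1 := by
  rw [Int.ceil_eq_iff]
  constructor
  · simpa using div_pos hr (hr.trans_le hrd)
  · simpa using div_le_one_of_le₀ hrd (hr.le.trans hrd)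

theorem ceil_neg_div_eq_zero {r d : K} (hr : 0 ≤ r) (hrd : r < d) : ⌈-r / d⌉ = 0 := by
  have hd : 0 < d := hr.trans_lt hrd
  rw [Int.ceil_eq_iff, neg_div]
  constructor
  · simpa using (div_lt_one hd).2 hrd
  · simpa using div_nonneg hr hd.le

theorem ceil_one_sub_div_add_ceil_div (y : ℤ) {n : ℕ} (hn : 0 < n) :
    ⌈(1 - y : K) / n⌉ + ⌈(y : K) / n⌉ = 1 := by
  have hnK : (n : K) ≠ 0 := by exact_mod_cast hn.ne'
  have hn' : (0 : ℤ) < n := by exact_mod_cast hn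
  set r := (y - 1) % n
  set k := (y - 1) / n
  have hr : (0 : K) ≤ r := by exact_mod_cast Int.emod_nonneg _ hn'.ne'
  have hrn : (r : K) < n := by exact_mod_cast Int.emod_lt_of_pos _ hn'
  have hrn' : (r : K) + 1 ≤ n := by exact_mod_cast Int.emod_lt_of_pos _ hn'
  have hy : (y : K) = (r + 1) + n * k := by
    exact_mod_cast (by linarith [Int.mul_ediv_add_emod (y - 1) n] : y = (r + 1) + n * k)
  rw [show (1 - y : K) = -r + n * (-k : ℤ) by push_cast; rw [hy]; ring, hy,
    ceil_add_mul_div _ _ _ hnK, ceil_add_mul_div _ _ _ hnK, ceil_neg_div_eq_zero hr hrn,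
    ceil_div_eq_one (by linarith) hrn']
  ring

def epsSameStart (d x y : K) : ℤ :=
  2 * ⌈x / d⌉ + 2 * ⌈y / d⌉ - ⌈(x - y) / d⌉

theorem epsSameStart_sub_add {d x y B : K} (q : ℤ) (hxy : x = y + B + d * q) (hB : 0 < B)
    (hBd : B < d) : epsSameStart d (x - B) (y + B) = epsSameStart d x y + 1 := by
  have hd : d ≠ 0 := (hB.trans hBd).ne'
  have hrow₁ : ⌈(x - B) / d⌉ = ⌈y / d⌉ + q := by
    rw [← ceil_add_mul_div _ _ _ hd, hxy, add_right_comm y, add_sub_cancel_right]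
  have hrow₂ : ⌈x / d⌉ = ⌈(y + B) / d⌉ + q := by
    rw [← ceil_add_mul_div _ _ _ hd, hxy]
  have hdiff₁ : ⌈(x - B - (y + B)) / d⌉ = q := by
    rw [show x - B - (y + B) = -B + d * q by rw [hxy]; ring,
      ceil_add_mul_div _ _ _ hd, ceil_neg_div_eq_zero hB.le hBd, zero_add]
  have hdiff₂ : ⌈(x - y) / d⌉ = 1 + q := by
    rw [show x - y = B + d * q by rw [hxy]; ring,
      ceil_add_mul_div _ _ _ hd, ceil_div_eq_one hB hBd.le]
  simp only [epsSameStart]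
  linarith

end CeilDiv

theorem epsTwo_self (n : ℕ) [NeZero n] (i : ZMod n) (l₁ l₂ : ℕ) :
    epsTwo n i i l₁ l₂ = epsSameStart (n : ℚ) l₁ l₂ := by
  have hn : 0 < n := Nat.pos_of_neZero n
  have hnQ : (n : ℚ) ≠ 0 := by exact_mod_cast hn.ne'
  simp only [epsTwo, epsSameStart, sub_self, zero_add, ZMod.val_zero, Nat.cast_zero, sub_zero]
  set v := ((l₁ : ZMod n) - 1).val
  set k := ((l₁ : ℤ) - 1) / n
  have hv : (v : ℤ) = ((l₁ : ℤ) - 1) % n := by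
    rw [← ZMod.val_intCast]
    push_cast
    rfl
  have hvn : (v : ℚ) + 1 ≤ n := by exact_mod_cast ZMod.val_lt ((l₁ : ZMod n) - 1)
  have hl₁ : (l₁ : ℚ) = (v + 1) + n * k := by
    exact_mod_cast (by linarith [Int.mul_ediv_add_emod ((l₁ : ℤ) - 1) n] :
      (l₁ : ℤ) = (v + 1) + n * k)
  have hceil₁ : ⌈(l₁ : ℚ) / n⌉ = 1 + k := by
    rw [hl₁, ceil_add_mul_div _ _ _ hnQ, ceil_div_eq_one (by positivity) hvn]
  have hceil₂ : ⌈((l₂ : ℚ) - v) / n⌉ = ⌈(1 - ((l₁ - l₂ : ℤ) : ℚ)) / n⌉ + k := by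
    rw [← ceil_add_mul_div _ _ _ hnQ]
    congr 2
    push_cast
    linarith
  have hsum := ceil_one_sub_div_add_ceil_div (K := ℚ) ((l₁ : ℤ) - l₂) hn
  push_cast at hceil₂ hsum
  linarith

theorem stmt_13_general (n : ℕ) [NeZero n] (i : ZMod n) (l₁ l₂ : ℕ)
    (hl : l₂ ≤ l₁) (hmod : l₁ % n ≠ l₂ % n)
    (B : ℕ) (hB : B = (l₁ - l₂) % n) :
    epsTwo n i i (l₁ - B) (l₂ + B) = epsTwo n i i l₁ l₂ + 1 := by
  have hBn : B < n := hB ▸ Nat.mod_lt _ (Nat.pos_of_neZero n)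
  have hB0 : 0 < B := by
    rw [Nat.pos_iff_ne_zero, hB]
    exact fun h ↦ hmod ((Nat.modEq_iff_dvd' hl).2 (Nat.dvd_of_mod_eq_zero h)).symm
  obtain ⟨q, hq⟩ : ∃ q, l₁ - l₂ = B + n * q := ⟨_, hB ▸ (Nat.mod_add_div _ _).symm⟩
  have hl₁ : l₁ = l₂ + B + n * q := by omega
  rw [epsTwo_self, epsTwo_self]
  push_cast [Nat.cast_sub (show B ≤ l₁ by omega)]
  exact epsSameStart_sub_add q (by exact_mod_cast hl₁) (by exact_mod_cast hB0)
    (by exact_mod_cast hBn)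

/-- Case 2 chain, codimension 1: for `i₁ = i₂ = i` and
`l₁ ≢ l₂ (mod n)`, with `l₁ - l₂ ≥ n` (so that the successor is distinct and
has its rows in order), the step
`[i;l₁)⊕[i;l₂) → [i;l₁-{l₁-l₂})⊕[i;l₂+{l₁-l₂})` in the chain satisfies
`ε(successor) = ε(predecessor) + 1`. -/
theorem stmt_13 (n : ℕ) [NeZero n] (hn : 2 ≤ n) (i : ZMod n) (l₁ l₂ : ℕ)
    (hl : l₂ ≤ l₁) (hmod : l₁ % n ≠ l₂ % n) (hbig : n ≤ l₁ - l₂)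
    (B : ℕ) (hB : B = (l₁ - l₂) % n) :
    epsTwo n i i (l₁ - B) (l₂ + B) = epsTwo n i i l₁ l₂ + 1 :=
  stmt_13_general n i l₁ l₂ hl hmod B hB
end

section
/- The two predecessors in Case 4, namely (m₁,m₂) = (l₁ - B, l₂ + B) and (m₁',m₂') = (l₁ - A, l₂ + A) with A = {i₂-i₁}, B = {i₁-i₂+l₁-l₂}, coincide as unordered labelled rows if and only if l₁ - l₂ < n + {i₂ - i₁}; in that case l₁ - B = l₂ + A and l₂ + B = l₁ - A. -/
/-- coincidence of the two Case-4 predecessors: with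
`i₁ ≠ i₂ ∈ ℤ/nℤ`, `l₁ ≥ l₂ ≥ 0`, `l₁ - l₂ ≢ i₂ - i₁ (mod n)`,
`l₁ - l₂ ≥ {i₂-i₁}`, `A = {i₂-i₁}`, `B = {i₁-i₂+l₁-l₂}`: the predecessors
`[i₁;l₁-B) ⊕ [i₂;l₂+B)` and `[i₂;l₁-A) ⊕ [i₁;l₂+A)` coincide as multisets of
segments (i.e. `l₁ - B = l₂ + A` and `l₂ + B = l₁ - A`) if and only if
`l₁ - l₂ < n + {i₂-i₁}`. -/
theorem stmt_16 (n : ℕ) [NeZero n] (hn : 2 ≤ n) (i₁ i₂ : ZMod n)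
    (l₁ l₂ : ℕ) (hl : l₂ ≤ l₁) (hne : i₁ ≠ i₂)
    (hcase4 : ((l₁ - l₂ : ℕ) : ZMod n) ≠ i₂ - i₁)
    (hexists : (i₂ - i₁).val ≤ l₁ - l₂)
    (A B : ℕ) (hA : A = (i₂ - i₁).val)
    (hB : B = (i₁ - i₂ + ((l₁ - l₂ : ℕ) : ZMod n)).val) :
    ((l₁ : ℤ) - B = (l₂ : ℤ) + A ∧ (l₂ : ℤ) + B = (l₁ : ℤ) - A) ↔
      (l₁ : ℤ) - l₂ < (n : ℤ) + A := by
  have hd : A ≤ l₁ - l₂ := hA ▸ hexists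
  have hBlt : B < n := hB ▸ ZMod.val_lt _
  have hBeq : B = (l₁ - l₂ - A) % n := by
    have hcast : ((l₁ - l₂ - A : ℕ) : ZMod n) = i₁ - i₂ + ((l₁ - l₂ : ℕ) : ZMod n) := by
      rw [Nat.cast_sub hd, hA, ZMod.natCast_val, ZMod.cast_id]
      ring
    rw [hB, ← hcast, ZMod.val_natCast]
  constructor
  · rintro ⟨h1, _⟩
    omega
  · intro h
    have hk : (l₁ - l₂ - A) % n = l₁ - l₂ - A := Nat.mod_eq_of_lt (by omega)
    rw [hk] at hBeq
    omega
end
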